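/- arXiv:1905.11861 — 5 statements merged into one kernel-verified Lean document; each statement's English description precedes it below -/
import Mathlib

section
/- Let G be a group acting on the right on a set X, let z ∈ X, and let i : G → X be the map i(g) = z·g. Assume there exists a G-equivariant map μ : X → G (i.e. μ(x·g) = μ(x)g for all x ∈ X, g ∈ G) with μ ∘ i = id_G. Then the restriction map i* from G-invariant Alexander–Spanier cochains on X to G-invariant Alexander–Spanier cochains on G (with G acting on itself by right translation), given by (i*φ)(g_0,…,g_q) = φ(z·g_0,…,z·g_q), is a morphism of cochain complexes and a cochain homotopy equivalence with homotopy inverse μ*: one has i* ∘ μ* = id, while μ* ∘ i* = r* with r := i ∘ μ, and δ∘K + K∘δ = r* − id for the operator K associated to r (which preserves invariant cochains). In particular i* induces an isomorphism on cohomology (ker δ / im δ) in every degree. -/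
namespace Stmt1

/-- Alexander–Spanier `q`-cochains on a set `X`: all functions `X^{q+1} → ℝ`. -/
abbrev Cochain (X : Type*) (q : ℕ) := (Fin (q + 1) → X) → ℝ

/-- The Alexander–Spanier coboundary. -/
def delta {X : Type*} {q : ℕ} (φ : Cochain X q) : Cochain X (q + 1) :=
  fun x => ∑ i : Fin (q + 2), (-1 : ℝ) ^ (i : ℕ) * φ (fun j => x (i.succAbove j))

/-- Pull-back of cochains along `r : X → X`. -/
def pull {X : Type*} (r : X → X) {q : ℕ} (φ : Cochain X q) : Cochain X q :=
  fun x => φ (fun i => r (x i))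

/-- The tuple `(r x₀, …, r xⱼ, xⱼ, xⱼ₊₁, …, x_q)`. -/
def kTuple {X : Type*} (r : X → X) {q : ℕ} (x : Fin (q + 1) → X) (j : Fin (q + 1)) :
    Fin (q + 2) → X :=
  fun i =>
    if h : (i : ℕ) ≤ (j : ℕ) then r (x ⟨(i : ℕ), lt_of_le_of_lt h j.isLt⟩)
    else x ⟨(i : ℕ) - 1, by have hi := i.isLt; omega⟩

/-- The cochain homotopy operator `K` associated to `r` (`K := 0` on `0`-cochains). -/
def K {X : Type*} (r : X → X) {q : ℕ} (φ : Cochain X (q + 1)) : Cochain X q :=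
  fun x => ∑ j : Fin (q + 1), (-1 : ℝ) ^ ((j : ℕ) + 1) * φ (kTuple r x j)

variable {X G : Type*}

/-- Restriction of cochains along `i : g ↦ z·g`. -/
def iStar (act : X → G → X) (z : X) {q : ℕ} (φ : Cochain X q) : Cochain G q :=
  fun g => φ (fun k => act z (g k))

/-- Pull-back of cochains along `μ : X → G`. -/
def muStar (μ : X → G) {q : ℕ} (ψ : Cochain G q) : Cochain X q :=
  fun x => ψ (fun k => μ (x k))

/-- Invariance of a cochain under the diagonal right `G`-action on `X`. -/
def InvX (act : X → G → X) {q : ℕ} (φ : Cochain X q) : Prop :=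
  ∀ (g : G) (x : Fin (q + 1) → X), φ (fun k => act (x k) g) = φ x

/-- Invariance of a cochain on `G` under diagonal right translation. -/
def InvG [Group G] {q : ℕ} (ψ : Cochain G q) : Prop :=
  ∀ (h : G) (g : Fin (q + 1) → G), ψ (fun k => g k * h) = ψ g

/-!
Equivariance of `μ` and `μ ∘ i = id` give `i^* ∘ μ^* = id` and make `r = i ∘ μ` equivariant, so
the prism operator `K` of `r` preserves invariant cochains. The formula `δK + Kδ = r^* − id` is
the classical prism computation: in `Kδ` the faces deleting an entry away from the doubled one
cancel `δK`, and the two faces at the doubled entry telescope from `φ` to `r^*φ`. As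
`r^* = μ^* ∘ i^*`, an invariant cocycle whose restriction is a coboundary is itself one.

For the index bookkeeping, tuples `Fin (q + 1) → X` are read as restrictions of sequences
`ℕ → X`, on which faces and prisms are plain `if`-expressions without `Fin` casts.
-/

open Finset

section Sequences

def dropAt (i : ℕ) (y : ℕ → X) : ℕ → X := fun k => if k < i then y k else y (k + 1)

/-- The ℕ-indexed form of `kTuple`. -/
def prism (r : X → X) (j : ℕ) (y : ℕ → X) : ℕ → X :=
  fun k => if k ≤ j then r (y k) else y (k - 1)

def mapBelow (r : X → X) (j : ℕ) (y : ℕ → X) : ℕ → X := fun k => if k < j then r (y k) else y k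

variable (r : X → X) (y : ℕ → X)

lemma dropAt_prism_of_lt {i j : ℕ} (h : i < j) :
    dropAt i (prism r j y) = prism r (j - 1) (dropAt i y) := by
  funext k; simp only [dropAt, prism]
  split_ifs <;> first | rfl | omega | (congr 1; omega)

lemma dropAt_prism_self (j : ℕ) : dropAt j (prism r j y) = mapBelow r j y := by
  funext k; simp only [dropAt, prism, mapBelow]
  split_ifs <;> first | rfl | omega

lemma dropAt_succ_prism (j : ℕ) : dropAt (j + 1) (prism r j y) = mapBelow r (j + 1) y := by
  funext k; simp only [dropAt, prism, mapBelow]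
  split_ifs <;> first | rfl | omega

lemma dropAt_prism_of_succ_lt {i j : ℕ} (h : j + 1 < i) :
    dropAt i (prism r j y) = prism r j (dropAt (i - 1) y) := by
  funext k; simp only [dropAt, prism]
  split_ifs <;> first | rfl | omega | (congr 1; omega)

lemma mapBelow_zero : mapBelow r 0 y = y := rfl

lemma mapBelow_apply_val {n : ℕ} (k : Fin n) : mapBelow r n y k = r (y k) := if_pos k.isLt

lemma exists_seq_apply_val {m : ℕ} (x : Fin (m + 1) → X) :
    ∃ y : ℕ → X, (fun k : Fin (m + 1) => y k) = x :=
  ⟨fun n => if h : n < m + 1 then x ⟨n, h⟩ else x 0, funext fun k => dif_pos k.isLt⟩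

end Sequences

section PrismSum

variable (F : (ℕ → X) → ℝ) (r : X → X) (y : ℕ → X)

lemma sum_diagonal (n : ℕ) :
    ∑ j ∈ range n, ((-1 : ℝ) ^ (j + j + 1) * F (dropAt j (prism r j y))
        + (-1 : ℝ) ^ (j + 1 + j + 1) * F (dropAt (j + 1) (prism r j y)))
      = F (mapBelow r n y) - F y := by
  have hterm : ∀ j ∈ range n, (-1 : ℝ) ^ (j + j + 1) * F (dropAt j (prism r j y))
        + (-1 : ℝ) ^ (j + 1 + j + 1) * F (dropAt (j + 1) (prism r j y))
      = F (mapBelow r (j + 1) y) - F (mapBelow r j y) := by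
    intro j _
    rw [dropAt_prism_self, dropAt_succ_prism, show j + j + 1 = 2 * j + 1 by ring,
      show j + 1 + j + 1 = 2 * (j + 1) by ring, pow_succ, pow_mul, pow_mul]
    norm_num
    ring
  rw [sum_congr rfl hterm, sum_range_sub (fun j => F (mapBelow r j y)), mapBelow_zero]

lemma sum_below_diagonal (q : ℕ) :
    ∑ j ∈ range (q + 2), ∑ i ∈ range j, (-1 : ℝ) ^ (i + j + 1) * F (dropAt i (prism r j y))
      = -∑ j ∈ range (q + 1), ∑ i ∈ range (j + 1),
          (-1 : ℝ) ^ (i + j + 1) * F (prism r j (dropAt i y)) := by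
  rw [sum_range_succ', range_zero, sum_empty, add_zero, ← sum_neg_distrib]
  refine sum_congr rfl fun j _ => ?_
  rw [← sum_neg_distrib]
  refine sum_congr rfl fun i hi => ?_
  rw [dropAt_prism_of_lt r y (mem_range.1 hi), Nat.add_sub_cancel,
    show i + (j + 1) + 1 = i + j + 1 + 1 by ring, pow_succ]
  ring

lemma sum_above_diagonal (q : ℕ) :
    ∑ j ∈ range (q + 2), ∑ i ∈ Ico (j + 2) (q + 3),
        (-1 : ℝ) ^ (i + j + 1) * F (dropAt i (prism r j y))
      = -∑ j ∈ range (q + 1), ∑ i ∈ Ico (j + 1) (q + 2),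
          (-1 : ℝ) ^ (i + j + 1) * F (prism r j (dropAt i y)) := by
  rw [sum_range_succ _ (q + 1), Ico_self, sum_empty, add_zero, ← sum_neg_distrib]
  refine sum_congr rfl fun j _ => ?_
  rw [sum_Ico_eq_sum_range, sum_Ico_eq_sum_range, ← sum_neg_distrib,
    show q + 3 - (j + 2) = q + 2 - (j + 1) by omega]
  refine sum_congr rfl fun k _ => ?_
  rw [dropAt_prism_of_succ_lt r y (by omega), show j + 2 + k - 1 = j + 1 + k by omega,
    show j + 2 + k + j + 1 = j + 1 + k + j + 1 + 1 by ring, pow_succ]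
  ring

/-- Split at `i < j`, `i ∈ {j, j + 1}` and `i > j + 1`: the two diagonals telescope, the two
off-diagonal parts cancel the first double sum. -/
lemma sum_prism_dropAt_add_sum_dropAt_prism (q : ℕ) :
    ∑ i ∈ range (q + 2), ∑ j ∈ range (q + 1),
        (-1 : ℝ) ^ (i + j + 1) * F (prism r j (dropAt i y))
      + ∑ j ∈ range (q + 2), ∑ i ∈ range (q + 3),
        (-1 : ℝ) ^ (i + j + 1) * F (dropAt i (prism r j y))
      = F (mapBelow r (q + 2) y) - F y := by
  have hsplit : ∀ j ∈ range (q + 2),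
      ∑ i ∈ range (q + 3), (-1 : ℝ) ^ (i + j + 1) * F (dropAt i (prism r j y))
        = ∑ i ∈ range j, (-1 : ℝ) ^ (i + j + 1) * F (dropAt i (prism r j y))
          + ((-1 : ℝ) ^ (j + j + 1) * F (dropAt j (prism r j y))
              + (-1 : ℝ) ^ (j + 1 + j + 1) * F (dropAt (j + 1) (prism r j y)))
          + ∑ i ∈ Ico (j + 2) (q + 3), (-1 : ℝ) ^ (i + j + 1) * F (dropAt i (prism r j y)) := by
    intro j hj
    have hj := mem_range.1 hj
    rw [← sum_range_add_sum_Ico _ (show j + 2 ≤ q + 3 by omega),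
      ← sum_range_add_sum_Ico _ (show j ≤ j + 2 by omega), sum_Ico_succ_top (by omega),
      sum_Ico_succ_top le_rfl, Ico_self, sum_empty, zero_add, add_assoc]
  have hfirst : ∑ i ∈ range (q + 2), ∑ j ∈ range (q + 1),
        (-1 : ℝ) ^ (i + j + 1) * F (prism r j (dropAt i y))
      = ∑ j ∈ range (q + 1), (∑ i ∈ range (j + 1),
            (-1 : ℝ) ^ (i + j + 1) * F (prism r j (dropAt i y))
          + ∑ i ∈ Ico (j + 1) (q + 2), (-1 : ℝ) ^ (i + j + 1) * F (prism r j (dropAt i y))) := by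
    rw [sum_comm]
    exact sum_congr rfl fun j hj => (sum_range_add_sum_Ico _ (by simp at hj; omega)).symm
  rw [sum_congr rfl hsplit, sum_add_distrib, sum_add_distrib, sum_below_diagonal,
    sum_diagonal, sum_above_diagonal, hfirst, sum_add_distrib]
  ring

end PrismSum

lemma val_succAbove {n : ℕ} (i : Fin (n + 1)) (k : Fin n) :
    (i.succAbove k : ℕ) = if (k : ℕ) < i then (k : ℕ) else k + 1 := by
  simp only [Fin.succAbove, Fin.lt_def, Fin.val_castSucc]
  split_ifs <;> simp only [Fin.val_castSucc, Fin.val_succ]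

lemma delta_apply_seq {q : ℕ} (φ : Cochain X q) (y : ℕ → X) :
    delta φ (fun k => y k) = ∑ i ∈ range (q + 2), (-1 : ℝ) ^ i * φ (fun k => dropAt i y k) := by
  rw [delta, ← Fin.sum_univ_eq_sum_range]
  refine sum_congr rfl fun i _ => ?_
  congr 2
  funext k
  simp only [val_succAbove, dropAt]
  split_ifs <;> rfl

lemma K_apply_seq (r : X → X) {q : ℕ} (φ : Cochain X (q + 1)) (y : ℕ → X) :
    K r φ (fun k => y k)
      = ∑ j ∈ range (q + 1), (-1 : ℝ) ^ (j + 1) * φ (fun k => prism r j y k) := by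
  rw [K, ← Fin.sum_univ_eq_sum_range (fun j => (-1 : ℝ) ^ (j + 1) * φ (fun k => prism r j y k))]
  rfl

theorem delta_K_add_K_delta (r : X → X) {q : ℕ} (φ : Cochain X (q + 1)) :
    delta (K r φ) + K r (delta φ) = pull r φ - φ := by
  funext x
  obtain ⟨y, rfl⟩ := exists_seq_apply_val x
  have h := sum_prism_dropAt_add_sum_dropAt_prism (fun w => φ (fun k => w k)) r y q
  simp only [mapBelow_apply_val] at h
  simp only [Pi.add_apply, Pi.sub_apply, pull, delta_apply_seq, K_apply_seq, ← h]
  congr 1 <;> refine sum_congr rfl fun i _ => ?_ <;> rw [mul_sum] <;>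
    refine sum_congr rfl fun j _ => ?_ <;> ring

theorem K_delta_of_zero (r : X → X) (φ : Cochain X 0) : K r (delta φ) = pull r φ - φ := by
  funext x
  obtain ⟨y, rfl⟩ := exists_seq_apply_val x
  simp only [Pi.sub_apply, pull, K_apply_seq, delta_apply_seq, sum_range_succ,
    range_zero, sum_empty, dropAt_prism_self, dropAt_succ_prism, mapBelow_apply_val, mapBelow_zero]
  ring

lemma delta_sub {q : ℕ} (φ ψ : Cochain X q) : delta (φ - ψ) = delta φ - delta ψ := by
  funext x
  simp only [delta, Pi.sub_apply, mul_sub, sum_sub_distrib]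

lemma K_zero (r : X → X) {q : ℕ} : K r (0 : Cochain X (q + 1)) = 0 := by
  funext x
  simp only [K, Pi.zero_apply, mul_zero, sum_const_zero]

lemma eq_delta_of_pull_eq_delta (r : X → X) {q : ℕ} {φ : Cochain X (q + 1)} {ξ : Cochain X q}
    (hφ : delta φ = 0) (hpull : pull r φ = delta ξ) : delta (ξ - K r φ) = φ := by
  have h := delta_K_add_K_delta r φ
  rw [hφ, K_zero, add_zero, hpull] at h
  rw [delta_sub, h, sub_sub_cancel]

lemma eq_zero_of_pull_eq_zero (r : X → X) {φ : Cochain X 0} (hφ : delta φ = 0)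
    (hpull : pull r φ = 0) : φ = 0 := by
  have h := K_delta_of_zero r φ
  rwa [hφ, K_zero, hpull, zero_sub, zero_eq_neg] at h

section Invariance

variable (act : X → G → X)

lemma InvX.sub {q : ℕ} {φ ψ : Cochain X q} (hφ : InvX act φ) (hψ : InvX act ψ) :
    InvX act (φ - ψ) := fun g x => by
  simp only [Pi.sub_apply, hφ g x, hψ g x]

lemma invX_K {r : X → X} (hr : ∀ x g, r (act x g) = act (r x) g) {q : ℕ}
    {φ : Cochain X (q + 1)} (hφ : InvX act φ) : InvX act (K r φ) := by
  intro g x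
  refine sum_congr rfl fun j _ => ?_
  have hkTuple : kTuple r (fun k => act (x k) g) j = fun i => act (kTuple r x j i) g := by
    funext i
    simp only [kTuple]
    split_ifs
    · exact hr _ g
    · rfl
  rw [hkTuple, hφ]

lemma iStar_muStar (z : X) {μ : X → G} (hμi : ∀ g : G, μ (act z g) = g) {q : ℕ}
    (ψ : Cochain G q) : iStar act z (muStar μ ψ) = ψ := by
  funext g
  simp only [iStar, muStar, hμi]

variable [Group G]

lemma invG_iStar (hmul : ∀ (x : X) (g h : G), act (act x g) h = act x (g * h)) (z : X)
    {q : ℕ} {φ : Cochain X q} (hφ : InvX act φ) : InvG (iStar act z φ) := fun h g => by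
  simp only [iStar, ← hmul, hφ h]

lemma invX_muStar {μ : X → G} (hμ : ∀ (x : X) (g : G), μ (act x g) = μ x * g)
    {q : ℕ} {ψ : Cochain G q} (hψ : InvG ψ) : InvX act (muStar μ ψ) := fun g x => by
  simp only [muStar, hμ, hψ g]

end Invariance

theorem restriction_is_homotopy_equivalence_general [Group G] (act : X → G → X)
    (hmul : ∀ (x : X) (g h : G), act (act x g) h = act x (g * h))
    (z : X) (μ : X → G)
    (hμ : ∀ (x : X) (g : G), μ (act x g) = μ x * g)
    (hμi : ∀ g : G, μ (act z g) = g) :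
    -- `i^*` is a chain map preserving invariant cochains
    ((∀ (q : ℕ) (φ : Cochain X q), iStar act z (delta φ) = delta (iStar act z φ)) ∧
     (∀ (q : ℕ) (φ : Cochain X q), InvX act φ → InvG (iStar act z φ))) ∧
    -- `μ^*` is a chain map preserving invariant cochains
    ((∀ (q : ℕ) (ψ : Cochain G q), muStar μ (delta ψ) = delta (muStar μ ψ)) ∧
     (∀ (q : ℕ) (ψ : Cochain G q), InvG ψ → InvX act (muStar μ ψ))) ∧
    -- `i^* ∘ μ^* = id`
    (∀ (q : ℕ) (ψ : Cochain G q), iStar act z (muStar μ ψ) = ψ) ∧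
    -- `μ^* ∘ i^* = r^*` with `r = i ∘ μ`
    (∀ (q : ℕ) (φ : Cochain X q),
        muStar μ (iStar act z φ) = pull (fun x => act z (μ x)) φ) ∧
    -- homotopy formula `δ∘K + K∘δ = r^* − id`
    ((∀ (q : ℕ) (φ : Cochain X (q + 1)),
        delta (K (fun x => act z (μ x)) φ) + K (fun x => act z (μ x)) (delta φ)
          = pull (fun x => act z (μ x)) φ - φ) ∧
      (∀ φ : Cochain X 0,
        K (fun x => act z (μ x)) (delta φ) = pull (fun x => act z (μ x)) φ - φ)) ∧
    -- `K` preserves invariant cochains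
    (∀ (q : ℕ) (φ : Cochain X (q + 1)),
        InvX act φ → InvX act (K (fun x => act z (μ x)) φ)) ∧
    -- `i^*` induces an isomorphism on cohomology of the invariant subcomplexes:
    -- surjectivity and injectivity on `ker δ / im δ`
    ((∀ (q : ℕ) (ψ : Cochain G q), InvG ψ → delta ψ = 0 →
        ∃ φ : Cochain X q, InvX act φ ∧ delta φ = 0 ∧ iStar act z φ = ψ) ∧
     (∀ (q : ℕ) (φ : Cochain X (q + 1)), InvX act φ → delta φ = 0 →
        ∀ η : Cochain G q, InvG η → iStar act z φ = delta η →
          ∃ ξ : Cochain X q, InvX act ξ ∧ delta ξ = φ) ∧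
     (∀ φ : Cochain X 0, InvX act φ → delta φ = 0 → iStar act z φ = 0 → φ = 0)) := by
  set r : X → X := fun x => act z (μ x)
  have hr : ∀ x g, r (act x g) = act (r x) g := fun x g => by simp only [r, hμ, hmul]
  refine ⟨⟨fun _ _ => rfl, fun _ _ => invG_iStar act hmul z⟩,
    ⟨fun _ _ => rfl, fun _ _ => invX_muStar act hμ⟩, fun _ => iStar_muStar act z hμi,
    fun _ _ => rfl, ⟨fun _ => delta_K_add_K_delta r, K_delta_of_zero r⟩,
    fun _ _ => invX_K act hr, ?_, ?_, ?_⟩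
  · intro q ψ hψ hδ
    refine ⟨muStar μ ψ, invX_muStar act hμ hψ, ?_, iStar_muStar act z hμi ψ⟩
    show muStar μ (delta ψ) = 0
    rw [hδ]
    rfl
  · intro q φ hφ hδ η hη hiφ
    refine ⟨muStar μ η - K r φ, (invX_muStar act hμ hη).sub act (invX_K act hr hφ),
      eq_delta_of_pull_eq_delta r hδ ?_⟩
    show muStar μ (iStar act z φ) = muStar μ (delta η)
    rw [hiφ]
  · intro φ _ hδ hiφ
    refine eq_zero_of_pull_eq_zero r hδ ?_
    show muStar μ (iStar act z φ) = 0
    rw [hiφ]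
    rfl

/-- If `G` acts on `X` on the right, `z ∈ X`, `i(g) = z·g` and `μ : X → G` is `G`-equivariant
with `μ ∘ i = id`, then `i^*` is a morphism of cochain complexes (preserving invariant
cochains) which is a cochain homotopy equivalence with homotopy inverse `μ^*`:
`i^* ∘ μ^* = id`, `μ^* ∘ i^* = r^*` with `r = i ∘ μ`, and `δK + Kδ = r^* − id` where `K`
preserves invariant cochains; in particular `i^*` induces an isomorphism on the cohomology
`ker δ / im δ` of the invariant subcomplexes in every degree. -/
theorem restriction_is_homotopy_equivalence [Group G] (act : X → G → X)
    (hone : ∀ x : X, act x 1 = x)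
    (hmul : ∀ (x : X) (g h : G), act (act x g) h = act x (g * h))
    (z : X) (μ : X → G)
    (hμ : ∀ (x : X) (g : G), μ (act x g) = μ x * g)
    (hμi : ∀ g : G, μ (act z g) = g) :
    -- `i^*` is a chain map preserving invariant cochains
    ((∀ (q : ℕ) (φ : Cochain X q), iStar act z (delta φ) = delta (iStar act z φ)) ∧
     (∀ (q : ℕ) (φ : Cochain X q), InvX act φ → InvG (iStar act z φ))) ∧
    -- `μ^*` is a chain map preserving invariant cochains
    ((∀ (q : ℕ) (ψ : Cochain G q), muStar μ (delta ψ) = delta (muStar μ ψ)) ∧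
     (∀ (q : ℕ) (ψ : Cochain G q), InvG ψ → InvX act (muStar μ ψ))) ∧
    -- `i^* ∘ μ^* = id`
    (∀ (q : ℕ) (ψ : Cochain G q), iStar act z (muStar μ ψ) = ψ) ∧
    -- `μ^* ∘ i^* = r^*` with `r = i ∘ μ`
    (∀ (q : ℕ) (φ : Cochain X q),
        muStar μ (iStar act z φ) = pull (fun x => act z (μ x)) φ) ∧
    -- homotopy formula `δ∘K + K∘δ = r^* − id`
    ((∀ (q : ℕ) (φ : Cochain X (q + 1)),
        delta (K (fun x => act z (μ x)) φ) + K (fun x => act z (μ x)) (delta φ)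
          = pull (fun x => act z (μ x)) φ - φ) ∧
      (∀ φ : Cochain X 0,
        K (fun x => act z (μ x)) (delta φ) = pull (fun x => act z (μ x)) φ - φ)) ∧
    -- `K` preserves invariant cochains
    (∀ (q : ℕ) (φ : Cochain X (q + 1)),
        InvX act φ → InvX act (K (fun x => act z (μ x)) φ)) ∧
    -- `i^*` induces an isomorphism on cohomology of the invariant subcomplexes:
    -- surjectivity and injectivity on `ker δ / im δ`
    ((∀ (q : ℕ) (ψ : Cochain G q), InvG ψ → delta ψ = 0 →
        ∃ φ : Cochain X q, InvX act φ ∧ delta φ = 0 ∧ iStar act z φ = ψ) ∧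
     (∀ (q : ℕ) (φ : Cochain X (q + 1)), InvX act φ → delta φ = 0 →
        ∀ η : Cochain G q, InvG η → iStar act z φ = delta η →
          ∃ ξ : Cochain X q, InvX act ξ ∧ delta ξ = φ) ∧
     (∀ φ : Cochain X 0, InvX act φ → delta φ = 0 → iStar act z φ = 0 → φ = 0)) :=
  restriction_is_homotopy_equivalence_general act hmul z μ hμ hμi

end Stmt1
end

section
/- Let A be an associative ring (not necessarily unital or commutative) and let I ⊆ A be a two-sided ideal such that every element of I can be written as a finite sum of products u·v with u, v ∈ I (i.e. I·I = I). Then for every a ∈ I and every T ∈ A the commutator [a, T] = aT − Ta lies in the additive subgroup of A generated by the commutators [u, v] = uv − vu with u, v ∈ I. -/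
/-!
Writing `a = ∑ uᵢ vᵢ` with `uᵢ, vᵢ ∈ I`, it suffices by additivity of `a ↦ aT - Ta` to treat
a single product `uv`. Then `[uv, T] = [u, vT] + [v, Tu]`, and both brackets are commutators of
elements of `I` because `I` is a two-sided ideal.
-/

theorem mul_mul_sub_mul_mul_eq_add {A : Type*} [NonUnitalRing A] (u v T : A) :
    u * v * T - T * (u * v) = (u * (v * T) - v * T * u) + (v * (T * u) - T * u * v) := by
  noncomm_ring

theorem TwoSidedIdeal.mul_mul_sub_mul_mul_mem_closure_commutators {A : Type*} [NonUnitalRing A]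
    (I : TwoSidedIdeal A) {u v : A} (hu : u ∈ I) (hv : v ∈ I) (T : A) :
    u * v * T - T * (u * v) ∈
      AddSubgroup.closure {x : A | ∃ u ∈ I, ∃ v ∈ I, x = u * v - v * u} := by
  rw [mul_mul_sub_mul_mul_eq_add]
  refine AddSubgroup.add_mem _ (AddSubgroup.subset_closure ?_) (AddSubgroup.subset_closure ?_)
  · exact ⟨u, hu, v * T, I.mul_mem_right v T hv, rfl⟩
  · exact ⟨v, hv, T * u, I.mul_mem_left T u hu, rfl⟩

/-- If `I` is a two-sided ideal of an associative (not necessarily unital) ring `A` such that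
every element of `I` is a finite sum of products of two elements of `I` (i.e. `I·I = I`), then
for every `a ∈ I` and every `T ∈ A` the commutator `[a,T] = aT − Ta` lies in the additive
subgroup of `A` generated by the commutators `[u,v]` with `u, v ∈ I`. -/
theorem commutator_with_ideal_mem_ideal_commutators
    {A : Type*} [NonUnitalRing A] (I : TwoSidedIdeal A)
    (hI : ∀ a ∈ I, a ∈ AddSubmonoid.closure {x : A | ∃ u ∈ I, ∃ v ∈ I, x = u * v}) :
    ∀ a ∈ I, ∀ T : A,
      a * T - T * a ∈
        AddSubgroup.closure {x : A | ∃ u ∈ I, ∃ v ∈ I, x = u * v - v * u} := by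
  intro a ha T
  let commutatorWith : A →+ A := AddMonoidHom.mulRight T - AddMonoidHom.mulLeft T
  have products_le : AddSubmonoid.closure {x : A | ∃ u ∈ I, ∃ v ∈ I, x = u * v} ≤
      ((AddSubgroup.closure {x : A | ∃ u ∈ I, ∃ v ∈ I, x = u * v - v * u}).comap
        commutatorWith).toAddSubmonoid := by
    rw [AddSubmonoid.closure_le]
    rintro _ ⟨u, hu, v, hv, rfl⟩
    exact I.mul_mul_sub_mul_mul_mem_closure_commutators hu hv T
  exact products_le (hI a ha)
end

section
/- Let A be an associative ring, I ⊆ A a two-sided ideal such that every element of I is a finite sum of products u·v with u, v ∈ I (i.e. I·I = I), and B ⊆ A a subring with A = I + B and I ∩ B = {0}. Then I ∩ ⟨[A,A]⟩ = ⟨[I,I]⟩: an element of I is a finite sum of commutators of elements of A if and only if it is a finite sum of commutators of elements of I. -/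
/-- Let `A` be an associative ring, `I ⊆ A` a two-sided ideal with `I·I = I` (every element of
`I` is a finite sum of products of two elements of `I`), and `B ⊆ A` a subring with
`A = I + B` and `I ∩ B = {0}`.  Then `I ∩ ⟨[A,A]⟩ = ⟨[I,I]⟩`: an element of `I` is a finite
sum of commutators of elements of `A` if and only if it is a finite sum of commutators of
elements of `I`. -/
theorem ideal_inter_commutators_eq_ideal_commutators
    {A : Type*} [NonUnitalRing A] (I : TwoSidedIdeal A) (B : NonUnitalSubring A)
    (hI : ∀ a ∈ I, a ∈ AddSubmonoid.closure {x : A | ∃ u ∈ I, ∃ v ∈ I, x = u * v})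
    (hsum : ∀ a : A, ∃ i ∈ I, ∃ b ∈ B, a = i + b)
    (hint : ∀ x : A, x ∈ I → x ∈ B → x = 0) :
    ∀ x : A,
      (x ∈ I ∧ x ∈ AddSubgroup.closure {y : A | ∃ u v : A, y = u * v - v * u}) ↔
        x ∈ AddSubgroup.closure {y : A | ∃ u ∈ I, ∃ v ∈ I, y = u * v - v * u} := by
  set G := AddSubgroup.closure {y : A | ∃ u ∈ I, ∃ v ∈ I, y = u * v - v * u} with hG
  -- G ⊆ I
  have hGI : ∀ z ∈ G, z ∈ I := by
    intro z hz
    refine AddSubgroup.closure_induction ?_ (I.zero_mem) (fun a b _ _ ha hb => I.add_mem ha hb)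
      (fun a _ ha => I.neg_mem ha) hz
    rintro y ⟨u, hu, v, hv, rfl⟩
    exact I.sub_mem (I.mul_mem_right _ _ hu) (I.mul_mem_right _ _ hv)
  -- commutators of I with anything lie in G
  have key : ∀ i ∈ I, ∀ a : A, i * a - a * i ∈ G := by
    intro i hi
    refine AddSubmonoid.closure_induction ?_ ?_ ?_ (hI i hi)
    · rintro y ⟨u, hu, v, hv, rfl⟩ a
      have h1 : u * (v * a) - (v * a) * u ∈ G :=
        AddSubgroup.subset_closure ⟨u, hu, v * a, I.mul_mem_right _ _ hv, rfl⟩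
      have h2 : v * (a * u) - (a * u) * v ∈ G :=
        AddSubgroup.subset_closure ⟨v, hv, a * u, I.mul_mem_left _ _ hu, rfl⟩
      have := G.add_mem h1 h2
      have heq : u * v * a - a * (u * v) =
          (u * (v * a) - (v * a) * u) + (v * (a * u) - (a * u) * v) := by
        noncomm_ring
      rwa [heq]
    · intro a; simpa using G.zero_mem
    · intro p q _ _ hp hq a
      have := G.add_mem (hp a) (hq a)
      have heq : (p + q) * a - a * (p + q) = (p * a - a * p) + (q * a - a * q) := by
        noncomm_ring
      rwa [heq]
  -- every element of the big closure splits as g + c, g ∈ G, c ∈ B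
  have split : ∀ z ∈ AddSubgroup.closure {y : A | ∃ u v : A, y = u * v - v * u},
      ∃ g ∈ G, ∃ c ∈ B, z = g + c := by
    intro z hz
    refine AddSubgroup.closure_induction ?_ ⟨0, G.zero_mem, 0, B.zero_mem, by simp⟩
      ?_ ?_ hz
    · rintro y ⟨a, a', rfl⟩
      obtain ⟨i, hi, b, hb, rfl⟩ := hsum a
      obtain ⟨i', hi', b', hb', rfl⟩ := hsum a'
      refine ⟨(i * i' - i' * i) + (i * b' - b' * i) + (b * i' - i' * b), ?_,
        b * b' - b' * b, B.sub_mem (B.mul_mem hb hb') (B.mul_mem hb' hb), by noncomm_ring⟩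
      have h3 : b * i' - i' * b = -(i' * b - b * i') := by abel
      exact G.add_mem (G.add_mem
        (AddSubgroup.subset_closure ⟨i, hi, i', hi', rfl⟩) (key i hi b'))
        (h3 ▸ G.neg_mem (key i' hi' b))
    · rintro p q _ _ ⟨g, hg, c, hc, rfl⟩ ⟨g', hg', c', hc', rfl⟩
      exact ⟨g + g', G.add_mem hg hg', c + c', B.add_mem hc hc', by abel⟩
    · rintro p _ ⟨g, hg, c, hc, rfl⟩
      exact ⟨-g, G.neg_mem hg, -c, B.neg_mem hc, by abel⟩
  intro x
  constructor
  · rintro ⟨hxI, hx⟩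
    obtain ⟨g, hg, c, hc, rfl⟩ := split x hx
    have : c ∈ I := by
      have := I.sub_mem hxI (hGI g hg); simpa using this
    have hc0 : c = 0 := hint c this hc
    simpa [hc0] using hg
  · intro hx
    refine ⟨hGI x hx, ?_⟩
    refine AddSubgroup.closure_mono ?_ hx
    rintro y ⟨u, _, v, _, rfl⟩
    exact ⟨u, v, rfl⟩
end

section
/- Let X be a finite type and k ∈ ℕ. Assume χ : X^{k+1} → ℂ satisfies the cyclic antisymmetry χ(x_k, x_0, x_1, …, x_{k−1}) = (−1)^k χ(x_0, x_1, …, x_k) for all x_0,…,x_k ∈ X (this holds in particular when χ is antisymmetric). Then for all kernels A_0,…,A_k : X × X → ℂ one has τ_χ(A_k, A_0, A_1, …, A_{k−1}) = (−1)^k τ_χ(A_0, A_1, …, A_k). -/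
namespace Stmt4

/-- The functional `τ_χ(A₀,…,A_k) = ∑_{x₀,…,x_k} A₀(x₀,x₁)⋯A_{k-1}(x_{k-1},x_k)·A_k(x_k,x₀)
· χ(x₀,…,x_k)` associated to a function `χ : X^{k+1} → ℂ` and kernels `Aᵢ : X × X → ℂ`. -/
noncomputable def tau {X : Type*} [Fintype X] {k : ℕ}
    (χ : (Fin (k + 1) → X) → ℂ) (A : Fin (k + 1) → X → X → ℂ) : ℂ :=
  ∑ x : Fin (k + 1) → X, (∏ i : Fin (k + 1), A i (x i) (x (i + 1))) * χ x

/-- If `χ : X^{k+1} → ℂ` satisfies the cyclic antisymmetry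
`χ(x_k, x₀, …, x_{k-1}) = (−1)^k χ(x₀, …, x_k)` (which holds in particular when `χ` is
antisymmetric), then `τ_χ(A_k, A₀, …, A_{k-1}) = (−1)^k τ_χ(A₀, …, A_k)` for all kernels. -/
theorem tau_cyclic {X : Type*} [Fintype X] {k : ℕ} (χ : (Fin (k + 1) → X) → ℂ)
    (hχ : ∀ x : Fin (k + 1) → X, χ (fun i => x (i - 1)) = (-1 : ℂ) ^ k * χ x)
    (A : Fin (k + 1) → X → X → ℂ) :
    tau χ (fun i => A (i - 1)) = (-1 : ℂ) ^ k * tau χ A := by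
  unfold tau
  rw [Finset.mul_sum]
  apply Fintype.sum_equiv ((Equiv.subRight (1 : Fin (k + 1))).arrowCongr (Equiv.refl X))
  intro y
  set z : Fin (k + 1) → X := fun i => y (i + 1) with hz
  have hy : ∀ i, y i = z (i - 1) := fun i => by simp [hz, sub_add_cancel]
  have h1 : (fun i => y i) = fun i => z (i - 1) := funext hy
  have hez : ((Equiv.subRight (1 : Fin (k + 1))).arrowCongr (Equiv.refl X)) y = z := by
    funext i
    simp [hz, Equiv.arrowCongr_apply, Function.comp, Equiv.subRight]
  rw [hez]
  have hprod : (∏ i : Fin (k + 1), A (i - 1) (y i) (y (i + 1)))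
      = ∏ i : Fin (k + 1), A i (z i) (z (i + 1)) := by
    apply Fintype.prod_equiv (Equiv.subRight (1 : Fin (k + 1)))
    intro i
    simp [Equiv.subRight, hy i, hy (i + 1), add_sub_right_comm]
  have hχz : χ y = (-1 : ℂ) ^ k * χ z := by
    rw [funext hy]
    exact hχ z
  rw [hprod, hχz]
  ring

end Stmt4
end

section
/- Let Γ be a group and γ ∈ Γ such that γ is not conjugate to γ⁻¹. Let S := {x ∈ Γ : x is conjugate to γ} ∪ {x ∈ Γ : x is conjugate to γ⁻¹}; S is invariant under conjugation by Γ and under inversion x ↦ x⁻¹. Let V be the ℂ-vector space of finitely supported functions S → ℂ, regarded as a representation of Γ via (g·f)(x) = f(g⁻¹xg), and define τ : V → V by (τf)(x) = f(x⁻¹). Then τ is a Γ-equivariant ℂ-linear involution, and each eigenspace {f ∈ V : τf = f} and {f ∈ V : τf = −f} is, as a representation of Γ, isomorphic to the permutation representation of Γ on finitely supported functions ({x : x conjugate to γ} → ℂ): for either sign ε = ±1, the map sending a finitely supported function f on the conjugacy class of γ to the function on S equal to f on that class and equal to ε·f(x⁻¹) at points x of the conjugacy class of γ⁻¹ is a Γ-equivariant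 ℂ-linear isomorphism onto the ε-eigenspace of τ. -/
/-!
Because `γ` is not conjugate to `γ⁻¹`, `S` is the disjoint union of the class `C` of `γ` and
its image under inversion, and inversion swaps the two pieces. So a function on `S` is a pair
of functions on `C`, `τ` swaps them, and its `ε`-eigenvectors (`ε² = 1`) are exactly the pairs
`(f, ε f)`. The action of `Γ` by conjugation preserves both pieces and commutes with inversion,
which gives the equivariance.
-/

namespace Stmt7

variable {Γ : Type*} [Group Γ]

lemma isConj_inv' {Γ : Type*} [Group Γ] {a b : Γ} (h : IsConj a b) : IsConj a⁻¹ b⁻¹ := by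
  obtain ⟨c, hc⟩ := isConj_iff.mp h
  refine isConj_iff.mpr ⟨c, ?_⟩
  rw [← hc]
  group

/-- The union `S` of the conjugacy classes of `γ` and of `γ⁻¹`. -/
def S (γ : Γ) : Set Γ := {x | IsConj γ x ∨ IsConj γ⁻¹ x}

/-- The conjugacy class `C` of `γ`. -/
def C (γ : Γ) : Set Γ := {x | IsConj γ x}

lemma conj_mem_S (γ g : Γ) {x : Γ} (hx : x ∈ S γ) : g * x * g⁻¹ ∈ S γ := by
  have hx' : IsConj γ x ∨ IsConj γ⁻¹ x := hx
  have hc : IsConj x (g * x * g⁻¹) := isConj_iff.mpr ⟨g, rfl⟩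
  exact hx'.imp (fun h => h.trans hc) (fun h => h.trans hc)

lemma inv_mem_S (γ : Γ) {x : Γ} (hx : x ∈ S γ) : x⁻¹ ∈ S γ := by
  have hx' : IsConj γ x ∨ IsConj γ⁻¹ x := hx
  rcases hx' with h | h
  · exact Or.inr (isConj_inv' h)
  · exact Or.inl (by simpa using isConj_inv' h)

lemma conj_mem_C (γ g : Γ) {x : Γ} (hx : x ∈ C γ) : g * x * g⁻¹ ∈ C γ := by
  have hx' : IsConj γ x := hx
  exact hx'.trans (isConj_iff.mpr ⟨g, rfl⟩)

lemma inv_mem_C (γ : Γ) {x : Γ} (hx : IsConj γ⁻¹ x) : x⁻¹ ∈ C γ := by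
  have h := isConj_inv' hx
  show IsConj γ x⁻¹
  simpa using h

/-- Conjugation by `g` as a bijection of `S γ`. -/
def conjS (γ g : Γ) : ↥(S γ) ≃ ↥(S γ) where
  toFun x := ⟨g * (x : Γ) * g⁻¹, conj_mem_S γ g x.2⟩
  invFun x := ⟨g⁻¹ * (x : Γ) * g, by
    have h := conj_mem_S γ g⁻¹ x.2
    simpa using h⟩
  left_inv x := by
    apply Subtype.ext
    show g⁻¹ * (g * (x : Γ) * g⁻¹) * g = (x : Γ)
    group
  right_inv x := by
    apply Subtype.ext
    show g * (g⁻¹ * (x : Γ) * g) * g⁻¹ = (x : Γ)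
    group

/-- Inversion as a bijection of `S γ`. -/
def invS (γ : Γ) : ↥(S γ) ≃ ↥(S γ) where
  toFun x := ⟨(x : Γ)⁻¹, inv_mem_S γ x.2⟩
  invFun x := ⟨(x : Γ)⁻¹, inv_mem_S γ x.2⟩
  left_inv x := by
    apply Subtype.ext
    show ((x : Γ)⁻¹)⁻¹ = (x : Γ)
    exact inv_inv _
  right_inv x := by
    apply Subtype.ext
    show ((x : Γ)⁻¹)⁻¹ = (x : Γ)
    exact inv_inv _

/-- Conjugation by `g` as a bijection of `C γ`. -/
def conjC (γ g : Γ) : ↥(C γ) ≃ ↥(C γ) where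
  toFun x := ⟨g * (x : Γ) * g⁻¹, conj_mem_C γ g x.2⟩
  invFun x := ⟨g⁻¹ * (x : Γ) * g, by
    have h := conj_mem_C γ g⁻¹ x.2
    simpa using h⟩
  left_inv x := by
    apply Subtype.ext
    show g⁻¹ * (g * (x : Γ) * g⁻¹) * g = (x : Γ)
    group
  right_inv x := by
    apply Subtype.ext
    show g * (g⁻¹ * (x : Γ) * g) * g⁻¹ = (x : Γ)
    group

/-- The action `(g·f)(x) = f(g⁻¹xg)` of `Γ` on finitely supported functions on `S γ`. -/
noncomputable def actS (γ g : Γ) (f : ↥(S γ) →₀ ℂ) : ↥(S γ) →₀ ℂ :=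
  Finsupp.equivMapDomain (conjS γ g) f

/-- The action `(g·f)(x) = f(g⁻¹xg)` of `Γ` on finitely supported functions on `C γ`. -/
noncomputable def actC (γ g : Γ) (f : ↥(C γ) →₀ ℂ) : ↥(C γ) →₀ ℂ :=
  Finsupp.equivMapDomain (conjC γ g) f

/-- The involution `(τf)(x) = f(x⁻¹)`. -/
noncomputable def tauInv (γ : Γ) (f : ↥(S γ) →₀ ℂ) : ↥(S γ) →₀ ℂ :=
  Finsupp.equivMapDomain (invS γ) f

/-- The inclusion of the conjugacy class of `γ` into `S γ`. -/
def j₁ (γ : Γ) : ↥(C γ) ↪ ↥(S γ) where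
  toFun y := ⟨(y : Γ), Or.inl y.2⟩
  inj' := by
    intro a b h
    have h' : (a : Γ) = (b : Γ) := congrArg (Subtype.val : ↥(S γ) → Γ) h
    exact Subtype.ext h'

/-- The inversion embedding of the conjugacy class of `γ` into `S γ`. -/
def j₂ (γ : Γ) : ↥(C γ) ↪ ↥(S γ) where
  toFun y := ⟨(y : Γ)⁻¹, Or.inr (isConj_inv' y.2)⟩
  inj' := by
    intro a b h
    have h' : ((a : Γ)⁻¹ : Γ) = ((b : Γ)⁻¹ : Γ) := congrArg (Subtype.val : ↥(S γ) → Γ) h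
    exact Subtype.ext (inv_injective h')

/-- The map sending a finitely supported function `f` on the conjugacy class of `γ` to the
function on `S γ` equal to `f` on that class and to `ε·f(x⁻¹)` at points `x` of the
conjugacy class of `γ⁻¹`. -/
noncomputable def Φ (γ : Γ) (ε : ℂ) (f : ↥(C γ) →₀ ℂ) : ↥(S γ) →₀ ℂ :=
  Finsupp.embDomain (j₁ γ) f + ε • Finsupp.embDomain (j₂ γ) f

section SignedEmbDomain

variable {α β R : Type*} [CommRing R] {j₁ j₂ : α ↪ β}

variable (j₁ j₂) in
noncomputable def signedEmbDomain (ε : R) : (α →₀ R) →ₗ[R] β →₀ R :=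
  Finsupp.lmapDomain R R j₁ + ε • Finsupp.lmapDomain R R j₂

variable (j₁ j₂) in
lemma signedEmbDomain_apply (ε : R) (f : α →₀ R) :
    signedEmbDomain j₁ j₂ ε f = f.embDomain j₁ + ε • f.embDomain j₂ := by
  simp [signedEmbDomain, Finsupp.embDomain_eq_mapDomain]

lemma signedEmbDomain_apply_left (hdisj : ∀ a b, j₁ a ≠ j₂ b) (ε : R) (f : α →₀ R) (a : α) :
    signedEmbDomain j₁ j₂ ε f (j₁ a) = f a := by
  have hnot : j₁ a ∉ Set.range j₂ := fun ⟨b, hb⟩ => hdisj a b hb.symm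
  rw [signedEmbDomain_apply, Finsupp.add_apply, Finsupp.smul_apply,
    Finsupp.embDomain_apply_self, Finsupp.embDomain_of_notMem_range _ _ _ hnot, smul_zero, add_zero]

lemma signedEmbDomain_apply_right (hdisj : ∀ a b, j₁ a ≠ j₂ b) (ε : R) (f : α →₀ R) (a : α) :
    signedEmbDomain j₁ j₂ ε f (j₂ a) = ε * f a := by
  have hnot : j₂ a ∉ Set.range j₁ := fun ⟨b, hb⟩ => hdisj b a hb
  rw [signedEmbDomain_apply, Finsupp.add_apply, Finsupp.smul_apply,
    Finsupp.embDomain_apply_self, Finsupp.embDomain_of_notMem_range _ _ _ hnot, zero_add,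
    smul_eq_mul]

lemma signedEmbDomain_injective (hdisj : ∀ a b, j₁ a ≠ j₂ b) (ε : R) :
    Function.Injective (signedEmbDomain j₁ j₂ ε) := fun f f' h => Finsupp.ext fun a => by
  simpa only [signedEmbDomain_apply_left hdisj] using DFunLike.congr_fun h (j₁ a)

lemma signedEmbDomain_comp_lmapDomain {e : α → α} {e' : β → β}
    (h₁ : j₁ ∘ e = e' ∘ j₁) (h₂ : j₂ ∘ e = e' ∘ j₂) (ε : R) :
    (signedEmbDomain j₁ j₂ ε).comp (Finsupp.lmapDomain R R e) =
      (Finsupp.lmapDomain R R e').comp (signedEmbDomain j₁ j₂ ε) := by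
  simp only [signedEmbDomain, LinearMap.add_comp, LinearMap.comp_add, LinearMap.smul_comp,
    LinearMap.comp_smul, ← Finsupp.lmapDomain_comp, h₁, h₂]

lemma equivMapDomain_eq_smul_iff (hcover : ∀ x, x ∈ Set.range j₁ ∨ x ∈ Set.range j₂)
    {σ : β ≃ β} (hσ₁ : ∀ a, σ (j₁ a) = j₂ a) (hσ₂ : ∀ a, σ (j₂ a) = j₁ a)
    {ε : R} (hε : ε * ε = 1) (F : β →₀ R) :
    F.equivMapDomain σ = ε • F ↔ ∀ a, F (j₂ a) = ε * F (j₁ a) := by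
  have hσ₁' : ∀ a, σ.symm (j₂ a) = j₁ a := fun a => σ.symm_apply_eq.mpr (hσ₁ a).symm
  have hσ₂' : ∀ a, σ.symm (j₁ a) = j₂ a := fun a => σ.symm_apply_eq.mpr (hσ₂ a).symm
  constructor
  · intro h a
    simpa only [Finsupp.equivMapDomain_apply, Finsupp.smul_apply, smul_eq_mul, hσ₂'] using
      DFunLike.congr_fun h (j₁ a)
  · intro h
    ext x
    rw [Finsupp.equivMapDomain_apply, Finsupp.smul_apply, smul_eq_mul]
    rcases hcover x with ⟨a, rfl⟩ | ⟨a, rfl⟩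
    · rw [hσ₂', h]
    · rw [hσ₁', h, ← mul_assoc, hε, one_mul]

lemma range_signedEmbDomain (hdisj : ∀ a b, j₁ a ≠ j₂ b)
    (hcover : ∀ x, x ∈ Set.range j₁ ∨ x ∈ Set.range j₂)
    {σ : β ≃ β} (hσ₁ : ∀ a, σ (j₁ a) = j₂ a) (hσ₂ : ∀ a, σ (j₂ a) = j₁ a)
    {ε : R} (hε : ε * ε = 1) :
    Set.range (signedEmbDomain j₁ j₂ ε) = {F | F.equivMapDomain σ = ε • F} := by
  ext F
  rw [Set.mem_ofPred_eq, equivMapDomain_eq_smul_iff hcover hσ₁ hσ₂ hε]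
  constructor
  · rintro ⟨f, rfl⟩ a
    rw [signedEmbDomain_apply_left hdisj, signedEmbDomain_apply_right hdisj]
  · intro h
    refine ⟨F.comapDomain j₁ j₁.injective.injOn, Finsupp.ext fun x => ?_⟩
    rcases hcover x with ⟨a, rfl⟩ | ⟨a, rfl⟩
    · rw [signedEmbDomain_apply_left hdisj, Finsupp.comapDomain_apply]
    · rw [signedEmbDomain_apply_right hdisj, Finsupp.comapDomain_apply, h]

end SignedEmbDomain

lemma conjS_one (γ : Γ) : conjS γ 1 = Equiv.refl _ :=
  Equiv.ext fun x => Subtype.ext (by simp [conjS])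

lemma conjS_mul (γ g h : Γ) : conjS γ (g * h) = (conjS γ h).trans (conjS γ g) :=
  Equiv.ext fun x => Subtype.ext (by simp only [conjS, Equiv.trans_apply, Equiv.coe_fn_mk]; group)

lemma invS_trans_invS (γ : Γ) : (invS γ).trans (invS γ) = Equiv.refl _ :=
  Equiv.ext fun x => Subtype.ext (inv_inv (x : Γ))

lemma conjS_trans_invS (γ g : Γ) : (conjS γ g).trans (invS γ) = (invS γ).trans (conjS γ g) :=
  Equiv.ext fun x => Subtype.ext
    (by simp only [conjS, invS, Equiv.trans_apply, Equiv.coe_fn_mk]; group)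

lemma actS_one (γ : Γ) (f : ↥(S γ) →₀ ℂ) : actS γ 1 f = f := by
  rw [actS, conjS_one, Finsupp.equivMapDomain_refl]

lemma actS_mul (γ g h : Γ) (f : ↥(S γ) →₀ ℂ) : actS γ (g * h) f = actS γ g (actS γ h f) := by
  rw [actS, actS, actS, conjS_mul, Finsupp.equivMapDomain_trans]

lemma tauInv_tauInv (γ : Γ) (f : ↥(S γ) →₀ ℂ) : tauInv γ (tauInv γ f) = f := by
  rw [tauInv, tauInv, ← Finsupp.equivMapDomain_trans, invS_trans_invS,
    Finsupp.equivMapDomain_refl]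

lemma tauInv_actS (γ g : Γ) (f : ↥(S γ) →₀ ℂ) : tauInv γ (actS γ g f) = actS γ g (tauInv γ f) := by
  rw [tauInv, actS, actS, tauInv, ← Finsupp.equivMapDomain_trans, conjS_trans_invS,
    Finsupp.equivMapDomain_trans]

lemma j₂_inv_mk {γ x : Γ} (hx : IsConj γ⁻¹ x) : j₂ γ ⟨x⁻¹, inv_mem_C γ hx⟩ = ⟨x, Or.inr hx⟩ :=
  Subtype.ext (inv_inv x)

lemma j₁_ne_j₂ {γ : Γ} (hnc : ¬ IsConj γ γ⁻¹) (a b : ↥(C γ)) : j₁ γ a ≠ j₂ γ b := by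
  intro h
  have hab : (a : Γ) = (b : Γ)⁻¹ := congrArg Subtype.val h
  exact hnc (a.2.trans (hab ▸ isConj_inv' b.2).symm)

lemma mem_range_j₁_or_j₂ (γ : Γ) (x : ↥(S γ)) :
    x ∈ Set.range (j₁ γ) ∨ x ∈ Set.range (j₂ γ) := by
  rcases x with ⟨x, h | h⟩
  · exact Or.inl ⟨⟨x, h⟩, rfl⟩
  · exact Or.inr ⟨_, j₂_inv_mk h⟩

lemma invS_j₁ (γ : Γ) (a : ↥(C γ)) : invS γ (j₁ γ a) = j₂ γ a := rfl

lemma invS_j₂ (γ : Γ) (a : ↥(C γ)) : invS γ (j₂ γ a) = j₁ γ a := Subtype.ext (inv_inv (a : Γ))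

lemma j₁_comp_conjC (γ g : Γ) : j₁ γ ∘ conjC γ g = conjS γ g ∘ j₁ γ := rfl

lemma j₂_comp_conjC (γ g : Γ) : j₂ γ ∘ conjC γ g = conjS γ g ∘ j₂ γ :=
  funext fun x => Subtype.ext (show (g * (x : Γ) * g⁻¹)⁻¹ = g * (x : Γ)⁻¹ * g⁻¹ by group)

lemma Φ_eq_signedEmbDomain (γ : Γ) (ε : ℂ) : Φ γ ε = signedEmbDomain (j₁ γ) (j₂ γ) ε :=
  funext fun f => (signedEmbDomain_apply _ _ ε f).symm

lemma Φ_actC (γ g : Γ) (ε : ℂ) (f : ↥(C γ) →₀ ℂ) :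
    Φ γ ε (actC γ g f) = actS γ g (Φ γ ε f) := by
  simpa only [actC, actS, Finsupp.equivMapDomain_eq_mapDomain, Φ_eq_signedEmbDomain,
    LinearMap.comp_apply, Finsupp.lmapDomain_apply] using LinearMap.congr_fun
      (signedEmbDomain_comp_lmapDomain (j₁_comp_conjC γ g) (j₂_comp_conjC γ g) ε) f

/-- Let `γ ∈ Γ` with `γ` not conjugate to `γ⁻¹`, and let
`S = class(γ) ∪ class(γ⁻¹)`.  Then `S` is invariant under conjugation and under inversion;
the inversion operator `τ` on `V = (S →₀ ℂ)` is a `Γ`-equivariant `ℂ`-linear involution for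
the representation `(g·f)(x) = f(g⁻¹xg)`; and for either sign `ε = ±1` the explicit map `Φ`
is a `Γ`-equivariant `ℂ`-linear isomorphism from the permutation representation on the
conjugacy class of `γ` onto the `ε`-eigenspace of `τ`. -/
theorem eigenspace_decomposition (γ : Γ) (hnc : ¬ IsConj γ γ⁻¹) :
    -- `S` is invariant under conjugation and under inversion
    ((∀ g x : Γ, x ∈ S γ → g * x * g⁻¹ ∈ S γ) ∧ (∀ x ∈ S γ, x⁻¹ ∈ S γ)) ∧
    -- `actS` is a `ℂ`-linear action of `Γ`
    ((∀ f : ↥(S γ) →₀ ℂ, actS γ 1 f = f) ∧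
     (∀ (g h : Γ) (f : ↥(S γ) →₀ ℂ), actS γ (g * h) f = actS γ g (actS γ h f)) ∧
     (∀ (g : Γ) (f f' : ↥(S γ) →₀ ℂ), actS γ g (f + f') = actS γ g f + actS γ g f') ∧
     (∀ (g : Γ) (c : ℂ) (f : ↥(S γ) →₀ ℂ), actS γ g (c • f) = c • actS γ g f)) ∧
    -- `τ` is a `Γ`-equivariant `ℂ`-linear involution
    ((∀ f f' : ↥(S γ) →₀ ℂ, tauInv γ (f + f') = tauInv γ f + tauInv γ f') ∧
     (∀ (c : ℂ) (f : ↥(S γ) →₀ ℂ), tauInv γ (c • f) = c • tauInv γ f) ∧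
     (∀ f : ↥(S γ) →₀ ℂ, tauInv γ (tauInv γ f) = f) ∧
     (∀ (g : Γ) (f : ↥(S γ) →₀ ℂ), tauInv γ (actS γ g f) = actS γ g (tauInv γ f))) ∧
    -- for `ε = ±1`, `Φ γ ε` is a `Γ`-equivariant `ℂ`-linear isomorphism onto the
    -- `ε`-eigenspace of `τ`
    (∀ ε : ℂ, ε = 1 ∨ ε = -1 →
      (∀ f f' : ↥(C γ) →₀ ℂ, Φ γ ε (f + f') = Φ γ ε f + Φ γ ε f') ∧
      (∀ (c : ℂ) (f : ↥(C γ) →₀ ℂ), Φ γ ε (c • f) = c • Φ γ ε f) ∧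
      (∀ (g : Γ) (f : ↥(C γ) →₀ ℂ), Φ γ ε (actC γ g f) = actS γ g (Φ γ ε f)) ∧
      Function.Injective (Φ γ ε) ∧
      Set.range (Φ γ ε) = {f : ↥(S γ) →₀ ℂ | tauInv γ f = ε • f} ∧
      -- pointwise description of `Φ`
      (∀ (f : ↥(C γ) →₀ ℂ) (x : Γ) (hx : x ∈ C γ),
          Φ γ ε f ⟨x, Or.inl hx⟩ = f ⟨x, hx⟩) ∧
      (∀ (f : ↥(C γ) →₀ ℂ) (x : Γ) (hx : IsConj γ⁻¹ x),
          Φ γ ε f ⟨x, Or.inr hx⟩ = ε * f ⟨x⁻¹, inv_mem_C γ hx⟩)) := by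
  refine ⟨⟨fun g x hx => conj_mem_S γ g hx, fun x hx => inv_mem_S γ hx⟩,
    ⟨actS_one γ, actS_mul γ, fun g => map_add (Finsupp.domLCongr (R := ℂ) (conjS γ g)),
      fun g => map_smul (Finsupp.domLCongr (R := ℂ) (conjS γ g))⟩,
    ⟨map_add (Finsupp.domLCongr (R := ℂ) (invS γ)),
      map_smul (Finsupp.domLCongr (R := ℂ) (invS γ)),
      tauInv_tauInv γ, tauInv_actS γ⟩, fun ε hε => ?_⟩
  have hε2 : ε * ε = 1 := by rcases hε with rfl | rfl <;> norm_num
  have hdisj := j₁_ne_j₂ hnc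
  refine ⟨?_, ?_, fun g => Φ_actC γ g ε, ?_⟩ <;> rw [Φ_eq_signedEmbDomain]
  · exact map_add _
  · exact map_smul _
  refine ⟨signedEmbDomain_injective hdisj ε,
    range_signedEmbDomain hdisj (mem_range_j₁_or_j₂ γ) (invS_j₁ γ) (invS_j₂ γ) hε2,
    fun f x hx => signedEmbDomain_apply_left hdisj ε f ⟨x, hx⟩, fun f x hx => ?_⟩
  rw [← j₂_inv_mk hx, signedEmbDomain_apply_right hdisj]

end Stmt7
end
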